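/- arXiv:1702.05567 — 3 statements merged into one kernel-verified Lean document; each statement's English description precedes it below -/
import Mathlib

section
/- Let G = (V,E) be a tree, L a set of links, and for S ⊆ V let δ_G(S) be the set of tree edges with exactly one endpoint in S. For a link ℓ, let P_ℓ be the edge set of the tree path between its endpoints. If x ∈ ℤ^L_{≥0} satisfies x(cov(e)) ≥ 1 for every e ∈ E (where cov(e) = {ℓ : e ∈ P_ℓ}) and |δ_G(S)| is odd, then Σ_{ℓ∈L} ⌈|P_ℓ ∩ δ_G(S)|/2⌉ · x_ℓ ≥ (|δ_G(S)| + 1)/2. -/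
open SimpleGraph

/-- Edge set of the unique path between `u` and `v` in a tree. -/
noncomputable def pathEdges {V : Type*} (G : SimpleGraph V) (hG : G.IsTree) (u v : V) :
    Set (Sym2 V) := {e | e ∈ ((hG.existsUnique_path u v).exists).choose.edges}

/-- `δ_G(S)`: the tree edges with exactly one endpoint in `S`. -/
def cutEdges {V : Type*} (G : SimpleGraph V) (S : Set V) : Set (Sym2 V) :=
  {e | e ∈ G.edgeSet ∧ ∃ a b, e = s(a, b) ∧ a ∈ S ∧ b ∉ S}

/-!
Summing the covering constraints over the edges of `δ(S)` counts each link `ℓ` exactly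
`|P_ℓ ∩ δ(S)|` times, so `|δ(S)| ≤ ∑ |P_ℓ ∩ δ(S)| x_ℓ ≤ 2 ∑ ⌈|P_ℓ ∩ δ(S)|/2⌉ x_ℓ`.
The right-hand side is an even integer and `|δ(S)|` is odd, so the inequality improves by one.
-/

open Classical in
theorem sum_ncard_inter_mul_eq_sum_sum {α L R : Type*} [Fintype L] [CommSemiring R]
    {T : Set α} (hT : T.Finite) (P : L → Set α) (x : L → R) :
    ∑ ℓ, ((P ℓ ∩ T).ncard : R) * x ℓ =
      ∑ e ∈ hT.toFinset, ∑ ℓ, if e ∈ P ℓ then x ℓ else 0 := by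
  rw [Finset.sum_comm]
  refine Finset.sum_congr rfl fun ℓ _ => ?_
  rw [← Finset.sum_filter, Finset.sum_const, nsmul_eq_mul,
    Set.ncard_eq_toFinset_card _ (hT.inter_of_right _)]
  congr 3
  ext e
  simp only [Set.Finite.mem_toFinset, Set.mem_inter_iff, Finset.mem_filter]
  exact and_comm

open Classical in
theorem ncard_le_sum_ncard_inter_mul {α L R : Type*} [Fintype L] [CommSemiring R]
    [PartialOrder R] [IsOrderedRing R] {T : Set α} (hT : T.Finite) (P : L → Set α)
    (x : L → R) (hcov : ∀ e ∈ T, 1 ≤ ∑ ℓ, if e ∈ P ℓ then x ℓ else 0) :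
    (T.ncard : R) ≤ ∑ ℓ, ((P ℓ ∩ T).ncard : R) * x ℓ := by
  rw [sum_ncard_inter_mul_eq_sum_sum hT, Set.ncard_eq_toFinset_card _ hT, Finset.card_eq_sum_ones,
    Nat.cast_sum, Nat.cast_one]
  exact Finset.sum_le_sum fun e he => hcov e (hT.mem_toFinset.mp he)

theorem natCast_le_two_mul_ceil_half (n : ℕ) : (n : ℤ) ≤ 2 * ⌈(n : ℚ) / 2⌉ := by
  have := Int.le_ceil ((n : ℚ) / 2)
  exact_mod_cast (by linarith : (n : ℚ) ≤ 2 * ⌈(n : ℚ) / 2⌉)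

theorem add_one_div_two_le_of_odd {n : ℕ} (hn : Odd n) {N : ℤ} (h : (n : ℤ) ≤ 2 * N) :
    ((n : ℚ) + 1) / 2 ≤ N := by
  obtain ⟨k, rfl⟩ := hn
  have : (k : ℤ) + 1 ≤ N := by push_cast at h; omega
  rw [div_le_iff₀ two_pos]
  push_cast
  exact_mod_cast (by linarith : (2 * k + 1 + 1 : ℤ) ≤ N * 2)

open Classical in
theorem stmt2_general {V : Type*} (G : SimpleGraph V) (hG : G.IsTree)
    {L : Type*} [Fintype L] (ep : L → V × V) (x : L → ℤ) (hx : ∀ ℓ, 0 ≤ x ℓ)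
    (hcov : ∀ e ∈ G.edgeSet,
      1 ≤ ∑ ℓ, if e ∈ pathEdges G hG (ep ℓ).1 (ep ℓ).2 then x ℓ else 0)
    (S : Set V) (hodd : Odd (cutEdges G S).ncard) :
    ((cutEdges G S).ncard + 1 : ℚ) / 2 ≤
      ∑ ℓ, (⌈((pathEdges G hG (ep ℓ).1 (ep ℓ).2 ∩ cutEdges G S).ncard : ℚ) / 2⌉ : ℚ)
        * (x ℓ : ℚ) := by
  set P : L → Set (Sym2 V) := fun ℓ => pathEdges G hG (ep ℓ).1 (ep ℓ).2
  -- `ncard` of an infinite set is `0`, which is even.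
  have hfin : (cutEdges G S).Finite := Set.finite_of_ncard_pos hodd.pos
  have hcount := ncard_le_sum_ncard_inter_mul hfin P x fun e he => hcov e he.1
  have hround : ∑ ℓ, ((P ℓ ∩ cutEdges G S).ncard : ℤ) * x ℓ ≤
      2 * ∑ ℓ, ⌈((P ℓ ∩ cutEdges G S).ncard : ℚ) / 2⌉ * x ℓ := by
    rw [Finset.mul_sum]
    refine Finset.sum_le_sum fun ℓ _ => ?_
    rw [← mul_assoc]
    exact mul_le_mul_of_nonneg_right (natCast_le_two_mul_ceil_half _) (hx ℓ)
  exact_mod_cast add_one_div_two_le_of_odd hodd (hcount.trans hround)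

open Classical in
/-- Validity of the odd-cut `{0,1/2}`-Chvátal–Gomory constraints for integer solutions
of the cut LP. -/
theorem stmt2 {V : Type*} [Fintype V] (G : SimpleGraph V) (hG : G.IsTree)
    {L : Type*} [Fintype L] (ep : L → V × V) (x : L → ℤ) (hx : ∀ ℓ, 0 ≤ x ℓ)
    (hcov : ∀ e ∈ G.edgeSet,
      1 ≤ ∑ ℓ, if e ∈ pathEdges G hG (ep ℓ).1 (ep ℓ).2 then x ℓ else 0)
    (S : Set V) (hodd : Odd (cutEdges G S).ncard) :
    ((cutEdges G S).ncard + 1 : ℚ) / 2 ≤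
      ∑ ℓ, (⌈((pathEdges G hG (ep ℓ).1 (ep ℓ).2 ∩ cutEdges G S).ncard : ℚ) / 2⌉ : ℚ)
        * (x ℓ : ℚ) :=
  stmt2_general G hG ep x hx hcov S hodd
end

section
/- Let G = (V,E) be a tree, S ⊆ V, and for each edge e ∈ E let y_e = x(cov(e)) − 1 for a vector x ∈ ℝ^L_{≥0}. Then the inequality Σ_{ℓ∈L} ⌈|P_ℓ ∩ δ_G(S)|/2⌉ · x_ℓ ≥ (|δ_G(S)|+1)/2 holds if and only if Σ_{ℓ∈δ_L(S)} x_ℓ + Σ_{e∈δ_G(S)} y_e ≥ 1, where δ_L(S) is the set of links with exactly one endpoint in S. -/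
open SimpleGraph

open Classical in
lemma parity_countP {V : Type*} (G : SimpleGraph V) (S : Set V) (db : Sym2 V → Bool)
    (hdb : ∀ e, db e = true ↔ ∃ a b, e = s(a, b) ∧ a ∈ S ∧ b ∉ S)
    {u v : V} (p : G.Walk u v) :
    (p.edges.countP db) % 2 = (if Xor' (u ∈ S) (v ∈ S) then 1 else 0) := by
  classical
  induction p with
  | nil => simp [Xor']
  | @cons u b v h q ih =>
    have hcross : db s(u, b) = true ↔ ((u ∈ S ∧ b ∉ S) ∨ (b ∈ S ∧ u ∉ S)) := by
      rw [hdb]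
      constructor
      · rintro ⟨a, c, habc, ha, hc⟩
        rw [Sym2.eq_iff] at habc
        rcases habc with ⟨rfl, rfl⟩ | ⟨rfl, rfl⟩
        · exact Or.inl ⟨ha, hc⟩
        · exact Or.inr ⟨ha, hc⟩
      · rintro (⟨h1, h2⟩ | ⟨h1, h2⟩)
        · exact ⟨u, b, rfl, h1, h2⟩
        · exact ⟨b, u, Sym2.eq_swap, h1, h2⟩
    rw [Walk.edges_cons, List.countP_cons]
    rw [if_congr hcross rfl rfl]
    by_cases h1 : u ∈ S <;> by_cases h2 : b ∈ S <;> by_cases h3 : v ∈ S <;>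
      simp [Xor', h1, h2, h3] at ih ⊢ <;> omega

lemma ceil_half (n : ℕ) :
    (⌈(n : ℚ) / 2⌉ : ℝ) = ((n : ℝ) + (if Odd n then 1 else 0)) / 2 := by
  rcases Nat.even_or_odd n with ⟨m, hm⟩ | ⟨m, hm⟩ <;> subst hm
  · rw [show ((m + m : ℕ) : ℚ) / 2 = ((m : ℤ) : ℚ) by push_cast; ring, Int.ceil_intCast]
    have : ¬ Odd (m + m) := Nat.not_odd_iff_even.mpr ⟨m, rfl⟩
    simp only [this, if_false]
    push_cast; ring
  · rw [show ((2 * m + 1 : ℕ) : ℚ) / 2 = 1 / 2 + ((m : ℤ) : ℚ) by push_cast; ring,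
      Int.ceil_add_intCast]
    have h12 : (⌈(1 / 2 : ℚ)⌉ : ℤ) = 1 := by rw [Int.ceil_eq_iff] <;> norm_num
    rw [h12]
    have : Odd (2 * m + 1) := ⟨m, rfl⟩
    simp only [this, if_true]
    push_cast; ring

open Classical in
/-- Rewriting the odd-cut constraint as a `T`-cut constraint via the slack variables
`y_e = x(cov(e)) - 1`. -/
theorem stmt3 {V : Type*} [Fintype V] (G : SimpleGraph V) (hG : G.IsTree)
    {L : Type*} [Fintype L] (ep : L → V × V) (x : L → ℝ) (hx : ∀ ℓ, 0 ≤ x ℓ)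
    (S : Set V) (y : Sym2 V → ℝ)
    (hy : ∀ e ∈ G.edgeSet,
      y e = (∑ ℓ, if e ∈ pathEdges G hG (ep ℓ).1 (ep ℓ).2 then x ℓ else 0) - 1) :
    (((cutEdges G S).ncard + 1 : ℝ) / 2 ≤
        ∑ ℓ, (⌈((pathEdges G hG (ep ℓ).1 (ep ℓ).2 ∩ cutEdges G S).ncard : ℚ) / 2⌉ : ℝ)
          * x ℓ) ↔
      (1 : ℝ) ≤ (∑ ℓ, if Xor' ((ep ℓ).1 ∈ S) ((ep ℓ).2 ∈ S) then x ℓ else 0) +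
        ∑ e ∈ (Set.toFinite (cutEdges G S)).toFinset, y e := by
  classical
  set D := (Set.toFinite (cutEdges G S)).toFinset with hDdef
  have hDmem : ∀ e, e ∈ D ↔ e ∈ cutEdges G S := fun e => Set.Finite.mem_toFinset _
  set k : L → ℕ := fun ℓ =>
    (pathEdges G hG (ep ℓ).1 (ep ℓ).2 ∩ cutEdges G S).ncard with hk
  -- k as a finset count
  have hkcard : ∀ ℓ, k ℓ = (D.filter (· ∈ pathEdges G hG (ep ℓ).1 (ep ℓ).2)).card := by
    intro ℓ
    have hs : pathEdges G hG (ep ℓ).1 (ep ℓ).2 ∩ cutEdges G S =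
        ↑(D.filter (· ∈ pathEdges G hG (ep ℓ).1 (ep ℓ).2)) := by
      ext e
      simp only [Finset.coe_filter, Set.mem_setOf_eq, Set.mem_inter_iff, hDmem]
      tauto
    simp only [hk, hs, Set.ncard_coe_finset]
  -- parity of k
  have hpar : ∀ ℓ, Odd (k ℓ) ↔ Xor' ((ep ℓ).1 ∈ S) ((ep ℓ).2 ∈ S) := by
    intro ℓ
    set u := (ep ℓ).1
    set v := (ep ℓ).2
    set w := ((hG.existsUnique_path u v).exists).choose with hw
    have hwp : w.IsPath := ((hG.existsUnique_path u v).exists).choose_spec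
    have hset : pathEdges G hG u v ∩ cutEdges G S =
        ↑((w.edges.filter (fun e => decide (∃ a b, e = s(a, b) ∧ a ∈ S ∧ b ∉ S))).toFinset) := by
      ext e
      simp only [Set.mem_inter_iff, pathEdges, Set.mem_setOf_eq, cutEdges,
        Finset.coe_sort_coe, List.coe_toFinset, List.mem_filter, decide_eq_true_eq]
      constructor
      · rintro ⟨h1, _, h3⟩; exact ⟨h1, h3⟩
      · rintro ⟨h1, h3⟩; exact ⟨h1, w.edges_subset_edgeSet h1, h3⟩
    have hnodup : (w.edges.filter
        (fun e => decide (∃ a b, e = s(a, b) ∧ a ∈ S ∧ b ∉ S))).Nodup :=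
      hwp.edges_nodup.filter _
    have hkℓ : k ℓ = w.edges.countP
        (fun e => decide (∃ a b, e = s(a, b) ∧ a ∈ S ∧ b ∉ S)) := by
      rw [hk]
      show (pathEdges G hG u v ∩ cutEdges G S).ncard = _
      simp only [hset, Set.ncard_coe_finset, List.toFinset_card_of_nodup hnodup,
        List.countP_eq_length_filter]
    rw [Nat.odd_iff, hkℓ]
    rw [parity_countP G S _ (fun e => by simp) w]
    split <;> simp_all
  -- ceiling formula
  have hceil : ∀ ℓ, (⌈((k ℓ : ℚ)) / 2⌉ : ℝ) =
      ((k ℓ : ℝ) + (if Xor' ((ep ℓ).1 ∈ S) ((ep ℓ).2 ∈ S) then 1 else 0)) / 2 := by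
    intro ℓ
    rw [ceil_half, if_congr (hpar ℓ) rfl rfl]
  -- rewrite the left sum
  have hL : ∑ ℓ, (⌈((k ℓ : ℚ)) / 2⌉ : ℝ) * x ℓ =
      ((∑ ℓ, (k ℓ : ℝ) * x ℓ) +
        ∑ ℓ, (if Xor' ((ep ℓ).1 ∈ S) ((ep ℓ).2 ∈ S) then x ℓ else 0)) / 2 := by
    rw [← Finset.sum_add_distrib, Finset.sum_div]
    refine Finset.sum_congr rfl fun ℓ _ => ?_
    rw [hceil ℓ]
    split <;> ring
  -- rewrite the slack sum
  have hB : ∑ e ∈ D, y e = (∑ ℓ, (k ℓ : ℝ) * x ℓ) - D.card := by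
    have h1 : ∀ e ∈ D, y e =
        (∑ ℓ, if e ∈ pathEdges G hG (ep ℓ).1 (ep ℓ).2 then x ℓ else 0) - 1 :=
      fun e he => hy e ((hDmem e).mp he).1
    rw [Finset.sum_congr rfl h1, Finset.sum_sub_distrib, Finset.sum_const, Finset.sum_comm]
    congr 1
    · refine Finset.sum_congr rfl fun ℓ _ => ?_
      rw [← Finset.sum_filter, Finset.sum_const, ← hkcard ℓ]
      simp [mul_comm]
    · simp
  -- the cut cardinality
  have hC : ((cutEdges G S).ncard : ℝ) = D.card := by
    rw [Set.ncard_eq_toFinset_card (cutEdges G S) (Set.toFinite _)]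
  rw [hC, hL, hB]
  constructor <;> intro h <;> linarith
end

section
/- Let G = (V,E) be a tree, e = {u,v} ∈ E, and let G^u, G^v be the two components of G − e. Suppose x ∈ ℝ^L_{≥0} satisfies x(cov(f)) ≥ 1 for every f ∈ E. Define x^u by keeping x on links internal to G^u, zeroing links meeting G^v, and for each p ∈ V[G^u] increasing x^u_{pu} by Σ_{ℓ' ∈ cov(e), p ∈ ℓ'} x_{ℓ'}. Then x^u satisfies x^u(cov_{G^u}(f)) ≥ 1 for every edge f of G^u, where covering in G^u is with respect to tree paths in G^u. -/
/-
Collapse every vertex outside `G^u` onto `u`, and send each link `ℓ = pq` to the link joining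
the images of its ends (oriented towards `u`). For an edge `f` of `G^u`, if `f` lies on the path
of `ℓ` then it lies on the path of the image: the part of the tree path from `p ∈ G^u` to the
other side that lies in `G^u` is the path from `p` to `u`, and paths between two vertices of the
other side avoid `G^u`. On the other hand `x^u` puts on each link at least the `x`-mass of all
links sent to it, so the covering of `f` by `x` passes to `x^u`.
-/

open SimpleGraph

open Classical in
lemma sum_ite_le_of_sum_fiber_le {ι κ : Type*} [Fintype ι] [Fintype κ] [DecidableEq κ]
    (σ : ι → κ) {P : ι → Prop} {Q : κ → Prop} {a : ι → ℝ} {b : κ → ℝ} (ha : ∀ i, 0 ≤ a i)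
    (hPQ : ∀ i, P i → Q (σ i)) (hab : ∀ k, Q k → ∑ i with σ i = k, a i ≤ b k) :
    ∑ i, (if P i then a i else 0) ≤ ∑ k, if Q k then b k else 0 := by
  calc ∑ i, (if P i then a i else 0) ≤ ∑ i, if Q (σ i) then a i else 0 :=
        Finset.sum_le_sum fun i _ ↦ by
          by_cases hi : P i <;> by_cases hσi : Q (σ i) <;> simp_all
    _ = ∑ k, ∑ i with σ i = k, if Q k then a i else 0 := by
        rw [← Finset.sum_fiberwise _ σ]
        refine Finset.sum_congr rfl fun k _ ↦ Finset.sum_congr rfl fun i hi ↦ ?_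
        rw [(Finset.mem_filter.mp hi).2]
    _ ≤ ∑ k, if Q k then b k else 0 := Finset.sum_le_sum fun k _ ↦ by
        by_cases hk : Q k <;> simp [hk, hab k]

namespace SimpleGraph

variable {V : Type*} {G : SimpleGraph V}

lemma Preconnected.reachable_deleteEdges_or (hG : G.Preconnected) {u v : V}
    (hb : G.IsBridge s(u, v)) (z : V) :
    (G.deleteEdges {s(u, v)}).Reachable u z ∨ (G.deleteEdges {s(u, v)}).Reachable v z := by
  by_contra! h
  obtain ⟨W, hW⟩ := (hG u z).exists_isPath
  exact hW.isTrail.not_mem_edges_of_not_reachable (isBridge_iff.mp hb) (fun h' ↦ h.2 h'.symm)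
    (W.mem_edges_of_not_reachable_deleteEdges h.1)

namespace IsTree

variable (hG : G.IsTree)
include hG

lemma pathEdges_eq_edges {a b : V} {W : G.Walk a b} (hW : W.IsPath) :
    pathEdges G hG a b = {e | e ∈ W.edges} := by
  have h := hG.existsUnique_path a b
  rw [pathEdges, h.unique h.exists.choose_spec hW]

lemma pathEdges_comm (a b : V) : pathEdges G hG a b = pathEdges G hG b a := by
  obtain ⟨W, hW, -⟩ := hG.existsUnique_path b a
  rw [hG.pathEdges_eq_edges hW.reverse, hG.pathEdges_eq_edges hW]
  simp

lemma pathEdges_self (a : V) : pathEdges G hG a a = ∅ := by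
  simp [hG.pathEdges_eq_edges Walk.IsPath.nil]

lemma pathEdges_of_adj {a b : V} (h : G.Adj a b) : pathEdges G hG a b = {s(a, b)} := by
  simp [hG.pathEdges_eq_edges (Walk.IsPath.of_adj h)]

lemma pathEdges_subset_union (a b c : V) :
    pathEdges G hG a c ⊆ pathEdges G hG a b ∪ pathEdges G hG b c := by
  classical
  obtain ⟨W₁, hW₁, -⟩ := hG.existsUnique_path a b
  obtain ⟨W₂, hW₂, -⟩ := hG.existsUnique_path b c
  rw [hG.pathEdges_eq_edges (W₁.append W₂).toPath.2, hG.pathEdges_eq_edges hW₁,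
    hG.pathEdges_eq_edges hW₂]
  intro e he
  simpa using (W₁.append W₂).edges_toPath_subset_edges he

lemma reachable_of_mem_pathEdges {H : SimpleGraph V} (hH : H ≤ G) {a b w : V}
    (hab : H.Reachable a b) {e : Sym2 V} (he : e ∈ pathEdges G hG a b) (hw : w ∈ e) :
    H.Reachable a w := by
  classical
  obtain ⟨W, hW⟩ := hab.exists_isPath
  rw [hG.pathEdges_eq_edges (hW.mapLe hH), Walk.edges_mapLe_eq_edges] at he
  exact ⟨W.takeUntil w (Walk.mem_support_of_mem_edges he hw)⟩

end IsTree

def sideOf (G : SimpleGraph V) (u v : V) : Set V :=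
  {z | (G.deleteEdges {s(u, v)}).Reachable u z}

lemma mem_sideOf_self (G : SimpleGraph V) (u v : V) : u ∈ G.sideOf u v := Reachable.refl u

open Classical in
noncomputable def collapseOutside (S : Set V) (u z : V) : V := if z ∈ S then z else u

lemma collapseOutside_of_mem {S : Set V} {z : V} (h : z ∈ S) (u : V) :
    collapseOutside S u z = z :=
  if_pos h

lemma collapseOutside_of_notMem {S : Set V} {z : V} (h : z ∉ S) (u : V) :
    collapseOutside S u z = u :=
  if_neg h

section Bridge

variable (hG : G.IsTree) {u v : V}
include hG

lemma IsTree.isBridge_of_adj (huv : G.Adj u v) : G.IsBridge s(u, v) :=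
  isAcyclic_iff_forall_adj_isBridge.mp hG.isAcyclic huv

lemma IsTree.notMem_sideOf (huv : G.Adj u v) : v ∉ G.sideOf u v :=
  isBridge_iff.mp (hG.isBridge_of_adj huv)

lemma IsTree.reachable_of_notMem_sideOf (huv : G.Adj u v) {z : V} (hz : z ∉ G.sideOf u v) :
    (G.deleteEdges {s(u, v)}).Reachable v z :=
  (hG.connected.preconnected.reachable_deleteEdges_or (hG.isBridge_of_adj huv) z).resolve_left hz

lemma IsTree.mem_pathEdges_of_mem_sideOf_of_notMem {p q : V} (hp : p ∈ G.sideOf u v)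
    (hq : q ∉ G.sideOf u v) : s(u, v) ∈ pathEdges G hG p q := by
  obtain ⟨W, hW, -⟩ := hG.existsUnique_path p q
  rw [hG.pathEdges_eq_edges hW]
  exact W.mem_edges_of_not_reachable_deleteEdges fun h ↦ hq (hp.trans h)

lemma IsTree.notMem_pathEdges_of_notMem_sideOf (huv : G.Adj u v) {f : Sym2 V}
    (hf : ∀ w ∈ f, w ∈ G.sideOf u v) {p : V} (hp : p ∉ G.sideOf u v) :
    f ∉ pathEdges G hG p u := by
  intro h
  apply hG.notMem_sideOf huv
  have hvp := hG.reachable_of_notMem_sideOf huv hp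
  induction f using Sym2.ind with | _ y z => ?_
  -- the path from `p` to `u` is the path from `p` to `v`, which avoids `uv`, followed by `uv`
  rcases hG.pathEdges_subset_union p v u h with h | h
  · have hvy := hvp.trans
      (hG.reachable_of_mem_pathEdges (deleteEdges_le _) hvp.symm h (Sym2.mem_mk_left y z))
    exact (hf y (Sym2.mem_mk_left y z)).trans hvy.symm
  · rw [hG.pathEdges_comm, hG.pathEdges_of_adj huv, Set.mem_singleton_iff] at h
    exact hf v (h ▸ Sym2.mem_mk_right u v)

lemma IsTree.mem_pathEdges_collapseOutside (huv : G.Adj u v) {f : Sym2 V}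
    (hf : ∀ w ∈ f, w ∈ G.sideOf u v) {p q : V} (h : f ∈ pathEdges G hG p q) :
    f ∈ pathEdges G hG (collapseOutside (G.sideOf u v) u p)
      (collapseOutside (G.sideOf u v) u q) := by
  suffices key : ∀ p q, q ∉ G.sideOf u v → f ∈ pathEdges G hG p q →
      f ∈ pathEdges G hG (collapseOutside (G.sideOf u v) u p) u by
    by_cases hq : q ∈ G.sideOf u v
    · by_cases hp : p ∈ G.sideOf u v
      · rwa [collapseOutside_of_mem hp, collapseOutside_of_mem hq]
      · rw [hG.pathEdges_comm] at h ⊢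
        rw [collapseOutside_of_notMem hp]
        simpa [collapseOutside_of_mem hq] using key q p hp h
    · rw [collapseOutside_of_notMem hq]
      exact key p q hq h
  intro p q hq h
  rcases hG.pathEdges_subset_union p u q h with h | h
  · by_cases hp : p ∈ G.sideOf u v
    · rwa [collapseOutside_of_mem hp]
    · exact absurd h (hG.notMem_pathEdges_of_notMem_sideOf huv hf hp)
  · rw [hG.pathEdges_comm] at h
    exact absurd h (hG.notMem_pathEdges_of_notMem_sideOf huv hf hq)

end Bridge

-- Images are oriented as `(p, u)` whenever one end is `u`: that is where `x^u` puts the mass.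
open Classical in
noncomputable def shadowLink (S : Set V) (u : V) (ℓ : V × V) : V × V :=
  if collapseOutside S u ℓ.1 = u then (collapseOutside S u ℓ.2, u)
  else (collapseOutside S u ℓ.1, collapseOutside S u ℓ.2)

section shadowLink

variable {S : Set V} {u a b : V} {ℓ : V × V}

lemma shadowLink_eq_of_ne (hb : b ≠ u) (h : shadowLink S u ℓ = (a, b)) :
    ℓ = (a, b) := by
  obtain ⟨p, q⟩ := ℓ
  unfold shadowLink collapseOutside at h
  grind

lemma shadowLink_eq_shadow (ha : a ≠ u) (h : shadowLink S u ℓ = (a, u)) :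
    ℓ = (a, u) ∨ ℓ = (u, a) ∨ (ℓ.1 = a ∧ ℓ.2 ∉ S) ∨ (ℓ.1 ∉ S ∧ ℓ.2 = a) := by
  obtain ⟨p, q⟩ := ℓ
  unfold shadowLink collapseOutside at h
  grind

lemma shadowLink_eq_or (hu : u ∈ S) (h : shadowLink S u ℓ = (a, b)) :
    (a = u ∧ b = u) ∨ (a ∈ S ∧ a ≠ u ∧ b ∈ S) := by
  obtain ⟨p, q⟩ := ℓ
  unfold shadowLink collapseOutside at h
  grind

end shadowLink

lemma IsTree.pathEdges_shadowLink (hG : G.IsTree) (S : Set V) (u : V) (ℓ : V × V) :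
    pathEdges G hG (shadowLink S u ℓ).1 (shadowLink S u ℓ).2 =
      pathEdges G hG (collapseOutside S u ℓ.1) (collapseOutside S u ℓ.2) := by
  unfold shadowLink
  split_ifs with h
  · rw [h, hG.pathEdges_comm]
  · rfl

open Classical in
noncomputable def splitSolution [Fintype V] (G : SimpleGraph V) (hG : G.IsTree) (S : Set V)
    (u v : V) (x : V × V → ℝ) (ℓ : V × V) : ℝ :=
  if ℓ.1 ∈ S ∧ ℓ.2 ∈ S ∧ ℓ.1 ≠ u ∧ ℓ.2 ≠ u then x ℓ
  else if ℓ.1 ∈ S ∧ ℓ.1 ≠ u ∧ ℓ.2 = u then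
    x (ℓ.1, u) + x (u, ℓ.1) +
      ∑ ℓ' : V × V, if s(u, v) ∈ pathEdges G hG ℓ'.1 ℓ'.2 ∧ (ℓ'.1 = ℓ.1 ∨ ℓ'.2 = ℓ.1)
        then x ℓ' else 0
  else 0

open Classical in
lemma IsTree.sum_shadowLink_fiber_le [Fintype V] (hG : G.IsTree) {u v : V}
    {x : V × V → ℝ} (hx : ∀ ℓ, 0 ≤ x ℓ) {m : V × V} (hm : m ≠ (u, u)) :
    ∑ ℓ with shadowLink (G.sideOf u v) u ℓ = m, x ℓ ≤
      splitSolution G hG (G.sideOf u v) u v x m := by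
  obtain ⟨a, b⟩ := m
  unfold splitSolution
  dsimp only
  split_ifs with hint hshadow
  · obtain ⟨-, -, -, hb⟩ := hint
    calc ∑ ℓ with shadowLink (G.sideOf u v) u ℓ = (a, b), x ℓ ≤ ∑ ℓ ∈ {(a, b)}, x ℓ :=
          Finset.sum_le_sum_of_subset_of_nonneg
            (fun ℓ hℓ ↦ by simpa using shadowLink_eq_of_ne hb (Finset.mem_filter.mp hℓ).2)
            (fun ℓ _ _ ↦ hx ℓ)
      _ = x (a, b) := Finset.sum_singleton _ _
  · obtain ⟨ha, hau, hb⟩ := hshadow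
    subst b
    set crossing := Finset.univ.filter fun ℓ : V × V ↦
      s(u, v) ∈ pathEdges G hG ℓ.1 ℓ.2 ∧ (ℓ.1 = a ∨ ℓ.2 = a)
    have hfiber : (Finset.univ.filter fun ℓ ↦ shadowLink (G.sideOf u v) u ℓ = (a, u)) ⊆
        {(a, u), (u, a)} ∪ crossing := by
      intro ℓ hℓ
      obtain ⟨p, q⟩ := ℓ
      rcases shadowLink_eq_shadow hau (Finset.mem_filter.mp hℓ).2 with
        h | h | ⟨rfl, hq⟩ | ⟨hp, rfl⟩
      · simp [h]
      · simp [h]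
      · simp [crossing, hG.mem_pathEdges_of_mem_sideOf_of_notMem ha hq]
      · simp [crossing, hG.pathEdges_comm p, hG.mem_pathEdges_of_mem_sideOf_of_notMem ha hp]
    calc ∑ ℓ with shadowLink (G.sideOf u v) u ℓ = (a, u), x ℓ
        ≤ ∑ ℓ ∈ {(a, u), (u, a)} ∪ crossing, x ℓ :=
          Finset.sum_le_sum_of_subset_of_nonneg hfiber (fun ℓ _ _ ↦ hx ℓ)
      _ ≤ ∑ ℓ ∈ {(a, u), (u, a)} ∪ crossing, x ℓ + ∑ ℓ ∈ {(a, u), (u, a)} ∩ crossing, x ℓ :=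
          le_add_of_nonneg_right (Finset.sum_nonneg fun ℓ _ ↦ hx ℓ)
      _ = x (a, u) + x (u, a) + ∑ ℓ ∈ crossing, x ℓ := by
          rw [Finset.sum_union_inter, Finset.sum_pair (by simp [hau])]
      _ = _ := by rw [Finset.sum_filter]
  · refine le_of_eq (Finset.sum_eq_zero fun ℓ hℓ ↦ ?_)
    have := shadowLink_eq_or (G.mem_sideOf_self u v) (Finset.mem_filter.mp hℓ).2
    grind

end SimpleGraph

open Classical in
/-- Splitting a fractional cut-LP solution along an edge `e = {u,v}` of the tree:
the split solution `x^u` (obtained by keeping links internal to `G^u`, zeroing links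
meeting `G^v`, and moving the mass of each link `ℓ'` covering `e` with endpoint
`p ∈ G^u` to the shadow link `pu`) still satisfies all cut constraints of `G^u`. -/
theorem stmt16 {V : Type*} [Fintype V] (G : SimpleGraph V) (hG : G.IsTree)
    (u v : V) (huv : G.Adj u v)
    (Gu : Set V) (hGu : Gu = {z | (G.deleteEdges {s(u, v)}).Reachable u z})
    (x : V × V → ℝ) (hx : ∀ ℓ, 0 ≤ x ℓ)
    (hfeas : ∀ f ∈ G.edgeSet, 1 ≤ ∑ ℓ : V × V, if f ∈ pathEdges G hG ℓ.1 ℓ.2 then x ℓ else 0)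
    (xu : V × V → ℝ)
    (hxu : ∀ p q : V, xu (p, q) =
      if p ∈ Gu ∧ q ∈ Gu ∧ p ≠ u ∧ q ≠ u then x (p, q)
      else if p ∈ Gu ∧ p ≠ u ∧ q = u then
        x (p, u) + x (u, p) +
          ∑ ℓ' : V × V, if s(u, v) ∈ pathEdges G hG ℓ'.1 ℓ'.2 ∧ (ℓ'.1 = p ∨ ℓ'.2 = p)
            then x ℓ' else 0
      else 0) :
    ∀ f ∈ G.edgeSet, (∀ a ∈ f, a ∈ Gu) →
      1 ≤ ∑ ℓ : V × V, if f ∈ pathEdges G hG ℓ.1 ℓ.2 then xu ℓ else 0 := by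
  obtain rfl : Gu = G.sideOf u v := hGu
  obtain rfl : xu = splitSolution G hG (G.sideOf u v) u v x := funext fun ℓ ↦ hxu ℓ.1 ℓ.2
  intro f hf hfu
  refine (hfeas f hf).trans (sum_ite_le_of_sum_fiber_le (shadowLink (G.sideOf u v) u) hx
    (fun ℓ hℓ ↦ ?_) (fun m hm ↦ hG.sum_shadowLink_fiber_le hx ?_))
  · rw [hG.pathEdges_shadowLink]
    exact hG.mem_pathEdges_collapseOutside huv hfu hℓ
  · rintro rfl
    simp [hG.pathEdges_self] at hm
end
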